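/- arXiv:2207.01025 — 2 statements merged into one kernel-verified Lean document; each statement's English description precedes it below -/
import Mathlib

section
/- For unit vectors z, n in ℝ³ with zᵀn ≠ -1, the angle error V = 1 - zᵀn satisfies V̇ = -k‖z × n‖² ≤ 0 when ż = ω × z with ω = ω_n + k (z × n) + λ z, where ω_n = n × ṅ; hence V is non-increasing along the flow. -/
open scoped InnerProductSpace

noncomputable def cross3 (u v : EuclideanSpace ℝ (Fin 3)) : EuclideanSpace ℝ (Fin 3) :=
  (WithLp.equiv 2 (Fin 3 → ℝ)).symm
    ![u 1 * v 2 - u 2 * v 1, u 2 * v 0 - u 0 * v 2, u 0 * v 1 - u 1 * v 0]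

/-!
With `ω = ω_n + k (z × n) + λ z`, the triple product gives
`d/dt ⟪z, n⟫ = ⟪ω × z, n⟫ + ⟪z, ω_n × n⟫ = ⟪ω - ω_n, z × n⟫ = k ‖z × n‖²`,
since `z × n ⊥ z`. So `V = 1 - ⟪z, n⟫` has derivative `-k ‖z × n‖² ≤ 0` and is antitone.
-/

section Cross3

variable (a b c : EuclideanSpace ℝ (Fin 3))

lemma inner_cross3_left : ⟪cross3 a b, c⟫_ℝ = ⟪a, cross3 b c⟫_ℝ := by
  simp only [cross3, PiLp.inner_apply, RCLike.inner_apply, conj_trivial, Fin.sum_univ_three,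
    WithLp.equiv_symm_apply, Matrix.cons_val_zero, Matrix.cons_val_one,
    Matrix.cons_val_two, Matrix.head_cons, Matrix.tail_cons]
  ring

lemma inner_cross3_right_swap : ⟪a, cross3 b c⟫_ℝ = -⟪b, cross3 a c⟫_ℝ := by
  simp only [cross3, PiLp.inner_apply, RCLike.inner_apply, conj_trivial, Fin.sum_univ_three,
    WithLp.equiv_symm_apply, Matrix.cons_val_zero, Matrix.cons_val_one,
    Matrix.cons_val_two, Matrix.head_cons, Matrix.tail_cons]
  ring

lemma inner_self_cross3 : ⟪a, cross3 a b⟫_ℝ = 0 := by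
  linarith [inner_cross3_right_swap a a b]

lemma inner_cross3_add_inner_cross3 (ω w : EuclideanSpace ℝ (Fin 3)) :
    ⟪cross3 ω a, b⟫_ℝ + ⟪a, cross3 w b⟫_ℝ = ⟪ω - w, cross3 a b⟫_ℝ := by
  rw [inner_cross3_left, inner_cross3_right_swap a w b, inner_sub_left]
  ring

end Cross3

lemma hasDerivAt_one_sub_inner_of_cross3_dynamics
    {z n : ℝ → EuclideanSpace ℝ (Fin 3)} {z' n' w : EuclideanSpace ℝ (Fin 3)} {k l t : ℝ}
    (hz : HasDerivAt z z' t) (hn : HasDerivAt n n' t)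
    (hndyn : n' = cross3 w (n t))
    (hzdyn : z' = cross3 (w + k • cross3 (z t) (n t) + l • z t) (z t)) :
    HasDerivAt (fun s => 1 - ⟪z s, n s⟫_ℝ) (-(k * ‖cross3 (z t) (n t)‖ ^ 2)) t := by
  have hinner : ⟪z t, n'⟫_ℝ + ⟪z', n t⟫_ℝ = k * ‖cross3 (z t) (n t)‖ ^ 2 := by
    rw [add_comm, hzdyn, hndyn, inner_cross3_add_inner_cross3, add_sub_right_comm,
      add_sub_cancel_left, inner_add_left, real_inner_smul_left, real_inner_smul_left,
      real_inner_self_eq_norm_sq, inner_self_cross3, mul_zero, add_zero]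
  exact ((hasDerivAt_const t (1 : ℝ)).sub (hz.inner ℝ hn)).congr_deriv (by rw [← hinner]; ring)

theorem stmt0_general
    (z n : ℝ → EuclideanSpace ℝ (Fin 3)) (z' n' : ℝ → EuclideanSpace ℝ (Fin 3))
    (k : ℝ) (lam : ℝ → ℝ)
    (hk : 0 < k)
    (hz : ∀ t, HasDerivAt z (z' t) t) (hn : ∀ t, HasDerivAt n (n' t) t)
    (hndyn : ∀ t, n' t = cross3 (cross3 (n t) (n' t)) (n t))
    (hzdyn : ∀ t, z' t =
      cross3 (cross3 (n t) (n' t) + k • cross3 (z t) (n t) + lam t • z t) (z t)) :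
    (∀ t, HasDerivAt (fun s => 1 - ⟪z s, n s⟫_ℝ) (-(k * ‖cross3 (z t) (n t)‖ ^ 2)) t) ∧
    (∀ t, -(k * ‖cross3 (z t) (n t)‖ ^ 2) ≤ 0) ∧
    Antitone (fun s => 1 - ⟪z s, n s⟫_ℝ) := by
  have hderiv t := hasDerivAt_one_sub_inner_of_cross3_dynamics (hz t) (hn t) (hndyn t) (hzdyn t)
  have hnonpos (t : ℝ) : -(k * ‖cross3 (z t) (n t)‖ ^ 2) ≤ 0 :=
    neg_nonpos.mpr (by positivity)
  refine ⟨hderiv, hnonpos, antitone_of_deriv_nonpos (fun t => (hderiv t).differentiableAt) ?_⟩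
  intro t
  rw [(hderiv t).deriv]
  exact hnonpos t

/-- For unit curves z, n with zᵀn ≠ -1, and closed-loop dynamics
ż = ω × z with ω = ω_n + k (z × n) + λ z, ω_n = n × ṅ, the error V = 1 - zᵀn
satisfies V̇ = -k‖z × n‖² ≤ 0 at every time, and V is non-increasing. -/
theorem stmt0
    (z n : ℝ → EuclideanSpace ℝ (Fin 3)) (z' n' : ℝ → EuclideanSpace ℝ (Fin 3))
    (k : ℝ) (lam : ℝ → ℝ)
    (hk : 0 < k) (hlam : Continuous lam)
    (hz : ∀ t, HasDerivAt z (z' t) t) (hn : ∀ t, HasDerivAt n (n' t) t)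
    (hzu : ∀ t, ‖z t‖ = 1) (hnu : ∀ t, ‖n t‖ = 1)
    (hne : ∀ t, ⟪z t, n t⟫_ℝ ≠ -1)
    (hndyn : ∀ t, n' t = cross3 (cross3 (n t) (n' t)) (n t))
    (hzdyn : ∀ t, z' t =
      cross3 (cross3 (n t) (n' t) + k • cross3 (z t) (n t) + lam t • z t) (z t)) :
    (∀ t, HasDerivAt (fun s => 1 - ⟪z s, n s⟫_ℝ) (-(k * ‖cross3 (z t) (n t)‖ ^ 2)) t) ∧
    (∀ t, -(k * ‖cross3 (z t) (n t)‖ ^ 2) ≤ 0) ∧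
    Antitone (fun s => 1 - ⟪z s, n s⟫_ℝ) :=
  stmt0_general z n z' n' k lam hk hz hn hndyn hzdyn
end

section
/- Let e(t) ≥ 0 be differentiable with ė ≤ -c·e·(2 - e) for a constant c > 0, and e(0) < 2. Then e(t) ≤ 2e(0)/(e(0) + (2-e(0))e^{2ct}) for all t ≥ 0; in particular e(t) → 0 exponentially. -/
open scoped InnerProductSpace

/-- If 0 ≤ e ≤ 2, ė ≤ -c e (2 - e) with c > 0 and e(0) < 2, then
e(t) ≤ 2e(0)/(e(0) + (2-e(0))exp(2ct)) for all t ≥ 0 (logistic comparison),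
so e decays exponentially to 0. -/
theorem stmt16
    (e e' : ℝ → ℝ) (c : ℝ) (hc : 0 < c)
    (he : ∀ t, HasDerivAt e (e' t) t)
    (hbound : ∀ t, 0 ≤ e t ∧ e t ≤ 2)
    (hode : ∀ t, 0 ≤ t → e' t ≤ -c * e t * (2 - e t))
    (hinit : e 0 < 2) :
    ∀ t, 0 ≤ t → e t ≤ 2 * e 0 / (e 0 + (2 - e 0) * Real.exp (2 * c * t)) := by
  have hdiff : Differentiable ℝ e := fun t => (he t).differentiableAt
  -- Step 1: e is nonincreasing on [0,∞)
  have hanti : AntitoneOn e (Set.Ici (0:ℝ)) := by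
    apply antitoneOn_of_deriv_nonpos (convex_Ici 0) hdiff.continuous.continuousOn
      (fun x _ => (hdiff x).differentiableWithinAt)
    intro x hx
    rw [interior_Ici] at hx
    rw [(he x).deriv]
    have h1 := (hbound x).1
    have h2 := (hbound x).2
    have := hode x (le_of_lt hx)
    nlinarith [mul_nonneg (mul_nonneg hc.le h1) (by linarith : (0:ℝ) ≤ 2 - e x)]
  have hlt : ∀ s : ℝ, 0 ≤ s → e s < 2 := fun s hs =>
    lt_of_le_of_lt (hanti (Set.self_mem_Ici) hs hs) hinit
  -- Step 2: h(s) = e s * exp(2cs) / (2 - e s) is nonincreasing on [0,∞)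
  set h : ℝ → ℝ := fun s => e s * Real.exp (2 * c * s) / (2 - e s) with hh
  have hder : ∀ s : ℝ, 0 ≤ s → HasDerivAt h
      (((e' s * Real.exp (2 * c * s) + e s * (Real.exp (2 * c * s) * (2 * c * 1))) * (2 - e s)
        - e s * Real.exp (2 * c * s) * (0 - e' s)) / (2 - e s) ^ 2) s := by
    intro s hs
    have hne : (2 : ℝ) - e s ≠ 0 := by have := hlt s hs; linarith
    have hexp : HasDerivAt (fun s : ℝ => Real.exp (2 * c * s))
        (Real.exp (2 * c * s) * (2 * c * 1)) s := by
      exact ((hasDerivAt_id s).const_mul (2 * c)).exp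
    exact ((he s).mul hexp).div ((hasDerivAt_const s 2).sub (he s)) hne
  have hantih : AntitoneOn h (Set.Ici (0:ℝ)) := by
    apply antitoneOn_of_deriv_nonpos (convex_Ici 0)
    · intro x hx
      exact ((hder x hx).continuousAt).continuousWithinAt
    · intro x hx
      rw [interior_Ici] at hx
      exact ((hder x (le_of_lt hx)).differentiableAt).differentiableWithinAt
    · intro x hx
      rw [interior_Ici] at hx
      rw [(hder x (le_of_lt hx)).deriv]
      apply div_nonpos_of_nonpos_of_nonneg _ (sq_nonneg _)
      have h1 := (hbound x).1
      have h2 := hlt x (le_of_lt hx)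
      have hE := Real.exp_pos (2 * c * x)
      have := hode x (le_of_lt hx)
      nlinarith [mul_nonneg hE.le (mul_nonneg (mul_nonneg hc.le h1) (by linarith : (0:ℝ) ≤ 2 - e x))]
  -- Step 3: conclude
  intro t ht
  have hkey : h t ≤ h 0 := hantih Set.self_mem_Ici ht ht
  have h0 : e 0 < 2 := hinit
  have h0' : 0 ≤ e 0 := (hbound 0).1
  have ht2 : e t < 2 := hlt t ht
  have ht0 : 0 ≤ e t := (hbound t).1
  have hE : 0 < Real.exp (2 * c * t) := Real.exp_pos _
  have hden : 0 < e 0 + (2 - e 0) * Real.exp (2 * c * t) := by nlinarith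
  rw [le_div_iff₀ hden]
  simp only [hh] at hkey
  rw [mul_zero, Real.exp_zero, mul_one] at hkey
  rw [div_le_div_iff₀ (by linarith) (by linarith)] at hkey
  nlinarith
end
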